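/- Let τ ∈ ℂ with Im τ > 0 and let u, v ∈ ℝ be not both integers. Then for every s ∈ [1,2] the limit f(s) := lim_{x→∞} Σ_{(m,n)∈ℤ², 0<|mτ+n|²≤x} e^{2πi(mu+nv)} / |mτ+n|^{2s} exists, the function f is continuous on [1,2], and for s ∈ (1,2] it equals the absolutely convergent double sum Σ_{(m,n)∈ℤ², (m,n)≠(0,0)} e^{2πi(mu+nv)} / |mτ+n|^{2s}. -/

import Mathlib

/-!
Write `e(t) = exp(2πit)`, `ω = mτ + n` and `S(x) = ∑_{|ω|² ≤ x} e(mu + nv)`. For fixed `m` the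
admissible `n` form an interval of integers (a sublevel set of a convex function), so when `v ∉ ℤ`
each row of `S(x)` is a geometric sum bounded by `2 / |e(v) - 1|`; there are `O(√x)` rows, so
`S(x) = O(√x)`. When `u ∉ ℤ`, sum over columns instead. Abel summation,
`∑_{x < |ω|² ≤ y} e(mu + nv) |ω|^{-2s} = s ∫_x^∞ t^{-s-1} (S(min y t) - S(x)) dt`,
turns this into a tail bound `O(x^{-1/2})` uniform in `s ≥ 1`. Hence the partial sums converge
uniformly on `[1, ∞)` and the limit is continuous there. For `s > 1` the series converges
absolutely by comparison with the Eisenstein series, so its sum is the same limit.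
-/

/-- The summand `e^{2πi(mu+nv)}/|mτ+n|^{2s}` of the twisted lattice sum,
indexed by `(m,n) ∈ ℤ × ℤ`. -/
noncomputable def latticeTerm (τ : ℂ) (u v : ℝ) (s : ℝ) (mn : ℤ × ℤ) : ℂ :=
  Complex.exp (2 * (Real.pi : ℂ) * Complex.I *
      (((mn.1 : ℝ) * u + (mn.2 : ℝ) * v : ℝ) : ℂ)) /
    ((‖(mn.1 : ℂ) * τ + (mn.2 : ℂ)‖ ^ (2 * s) : ℝ) : ℂ)

open Filter Topology Finset MeasureTheory UpperHalfPlane EisensteinSeries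
open scoped FourierTransform

lemma norm_sum_zpow_Icc_le {c : ℂ} (hc : ‖c‖ = 1) (hc1 : c ≠ 1) (a b : ℤ) :
    ‖∑ n ∈ Icc a b, c ^ n‖ ≤ 2 / ‖c - 1‖ := by
  have hc0 : c ≠ 0 := by rintro rfl; simp at hc
  rw [Int.Icc_eq_finset_map, sum_map]
  simp only [Function.Embedding.trans_apply, Nat.castEmbedding_apply, addLeftEmbedding_apply,
    zpow_add₀ hc0, zpow_natCast, ← mul_sum, geom_sum_eq hc1, norm_mul, norm_zpow, hc, one_zpow,
    one_mul, norm_div]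
  gcongr
  calc ‖c ^ _ - 1‖ ≤ ‖c ^ _‖ + ‖(1 : ℂ)‖ := norm_sub_le _ _
    _ = 2 := by rw [norm_pow, hc]; norm_num

lemma Finset.eq_Icc_min'_max' {α : Type*} [LinearOrder α] [LocallyFiniteOrder α]
    {T : Finset α} (hT : (T : Set α).OrdConnected) (h : T.Nonempty) :
    T = Icc (T.min' h) (T.max' h) := by
  ext n
  refine ⟨fun hn => mem_Icc.2 ⟨min'_le T n hn, le_max' T n hn⟩, fun hn => ?_⟩
  exact hT.out (min'_mem T h) (max'_mem T h) (mem_Icc.1 hn)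

lemma norm_sum_zpow_le_of_ordConnected {c : ℂ} (hc : ‖c‖ = 1) (hc1 : c ≠ 1) {T : Finset ℤ}
    (hT : (T : Set ℤ).OrdConnected) : ‖∑ n ∈ T, c ^ n‖ ≤ 2 / ‖c - 1‖ := by
  rcases T.eq_empty_or_nonempty with rfl | h
  · rw [sum_empty, norm_zero]; positivity
  · rw [T.eq_Icc_min'_max' hT h]
    exact norm_sum_zpow_Icc_le hc hc1 _ _

lemma norm_sum_sum_le_card_mul {ι κ : Type*} (I : Finset ι) (T : ι → Finset κ) (F : ι → κ → ℂ)
    {B : ℝ} (h : ∀ i ∈ I, ‖∑ j ∈ T i, F i j‖ ≤ B) : ‖∑ i ∈ I, ∑ j ∈ T i, F i j‖ ≤ #I * B := by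
  rw [← nsmul_eq_mul]
  exact (norm_sum_le _ _).trans (sum_le_card_nsmul _ _ _ h)

lemma convexOn_norm_smul_add_sq {E : Type*} [NormedAddCommGroup E] [NormedSpace ℝ E] (w c : E) :
    ConvexOn ℝ Set.univ fun t : ℝ => ‖t • w + c‖ ^ 2 := by
  have h := convexOn_univ_norm.comp_affineMap (AffineMap.lineMap (k := ℝ) c (c + w))
  rw [Set.preimage_univ] at h
  have hf : (norm ∘ AffineMap.lineMap (k := ℝ) c (c + w)) ^ 2 = fun t : ℝ => ‖t • w + c‖ ^ 2 := by
    ext t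
    simp [AffineMap.lineMap_apply]
  exact hf ▸ h.pow (fun _ _ => norm_nonneg _) 2

lemma ordConnected_setOf_norm_zsmul_add_sq_le {E : Type*} [NormedAddCommGroup E]
    [NormedSpace ℝ E] (w c : E) (x : ℝ) : {k : ℤ | ‖k • w + c‖ ^ 2 ≤ x}.OrdConnected := by
  have := ((convexOn_norm_smul_add_sq w c).convex_le x).ordConnected.preimage_mono
    (Int.cast_mono (R := ℝ))
  simpa [Int.cast_smul_eq_zsmul] using this

lemma integral_Ioi_rpow_mul_ite {x s q : ℝ} (a : ℂ) (hx : 0 < x) (hs : 0 < s) (hq : x < q) :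
    ∫ t in Set.Ioi x, ((t ^ (-s - 1) : ℝ) : ℂ) * (if q ≤ t then a else 0) =
      a * ((q ^ (-s) / s : ℝ) : ℂ) := by
  have hind : (fun t : ℝ => ((t ^ (-s - 1) : ℝ) : ℂ) * (if q ≤ t then a else 0)) =
      (Set.Ici q).indicator fun t => ((t ^ (-s - 1) : ℝ) : ℂ) * a := by
    ext t
    by_cases ht : q ≤ t <;> simp [ht]
  rw [hind, integral_indicator measurableSet_Ici, Measure.restrict_restrict measurableSet_Ici,
    Set.inter_eq_left.2 (Set.Ici_subset_Ioi.2 hq), integral_Ici_eq_integral_Ioi,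
    integral_mul_const, integral_complex_ofReal,
    integral_Ioi_rpow_of_lt (by linarith) (hx.trans hq), mul_comm]
  congr 2
  rw [show -s - 1 + 1 = -s by ring, neg_div_neg_eq]

/-- Abel summation in integral form, from `q ^ (-s) = s * ∫ t in Ioi q, t ^ (-s - 1)`. -/
theorem sum_div_rpow_eq_mul_integral {ι : Type*} (A : Finset ι) (a : ι → ℂ) (q : ι → ℝ)
    {x s : ℝ} (hx : 0 < x) (hs : 0 < s) (hq : ∀ i ∈ A, x < q i) :
    ∑ i ∈ A, a i / ((q i ^ s : ℝ) : ℂ) =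
      s * ∫ t in Set.Ioi x, ((t ^ (-s - 1) : ℝ) : ℂ) * ∑ i ∈ A with q i ≤ t, a i := by
  have hint : ∀ i ∈ A, IntegrableOn
      (fun t : ℝ => ((t ^ (-s - 1) : ℝ) : ℂ) * (if q i ≤ t then a i else 0)) (Set.Ioi x) := by
    intro i _
    refine ((((integrableOn_Ioi_rpow_of_lt (by linarith : -s - 1 < -1) hx).ofReal).mul_const
      (a i)).indicator (measurableSet_Ici (a := q i))).congr (Eventually.of_forall fun t => ?_)
    by_cases ht : q i ≤ t <;> simp [ht]
  simp_rw [sum_filter, mul_sum]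
  rw [integral_finsetSum _ hint, mul_sum]
  refine sum_congr rfl fun i hi => ?_
  rw [integral_Ioi_rpow_mul_ite (a i) hx hs (hq i hi), Real.rpow_neg (hx.trans (hq i hi)).le]
  have : (s : ℂ) ≠ 0 := by exact_mod_cast hs.ne'
  push_cast
  field_simp

theorem norm_sum_div_rpow_le {ι : Type*} (A : Finset ι) (a : ι → ℂ) (q : ι → ℝ) {x s K : ℝ}
    (hx : 1 ≤ x) (hs : 1 ≤ s) (hK : 0 ≤ K) (hq : ∀ i ∈ A, x < q i)
    (ha : ∀ t, x < t → ‖∑ i ∈ A with q i ≤ t, a i‖ ≤ K * √t) :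
    ‖∑ i ∈ A, a i / ((q i ^ s : ℝ) : ℂ)‖ ≤ 2 * K / √x := by
  have hx0 : 0 < x := by linarith
  have hs0 : 0 < s := by linarith
  have hexp : -s - 1 / 2 < -1 := by linarith
  have hbound : ∀ t ∈ Set.Ioi x, ‖((t ^ (-s - 1) : ℝ) : ℂ) * ∑ i ∈ A with q i ≤ t, a i‖ ≤
      K * t ^ (-s - 1 / 2) := by
    intro t ht
    have ht0 : 0 < t := hx0.trans ht
    rw [norm_mul, Complex.norm_real, Real.norm_of_nonneg (by positivity)]
    calc t ^ (-s - 1) * ‖∑ i ∈ A with q i ≤ t, a i‖ ≤ t ^ (-s - 1) * (K * √t) := by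
          gcongr
          exact ha t ht
      _ = K * t ^ (-s - 1 / 2) := by
          rw [Real.sqrt_eq_rpow, mul_left_comm, ← Real.rpow_add ht0]
          ring_nf
  have hI := norm_integral_le_of_norm_le ((integrableOn_Ioi_rpow_of_lt hexp hx0).const_mul K)
    ((ae_restrict_iff' measurableSet_Ioi).2 (Eventually.of_forall hbound))
  rw [integral_const_mul, integral_Ioi_rpow_of_lt hexp hx0,
    show -s - 1 / 2 + 1 = 1 / 2 - s by ring] at hI
  have hpow : x ^ (1 / 2 - s) ≤ x ^ (-(1 / 2) : ℝ) :=
    Real.rpow_le_rpow_of_exponent_le hx (by linarith)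
  have hfrac0 : 0 ≤ s / (s - 1 / 2) := div_nonneg hs0.le (by linarith)
  have hfrac : s / (s - 1 / 2) ≤ 2 := by
    rw [div_le_iff₀ (by linarith)]
    linarith
  rw [sum_div_rpow_eq_mul_integral A a q hx0 hs0 hq, norm_mul, Complex.norm_real,
    Real.norm_of_nonneg hs0.le]
  calc s * ‖∫ t in Set.Ioi x, ((t ^ (-s - 1) : ℝ) : ℂ) * ∑ i ∈ A with q i ≤ t, a i‖
      ≤ s * (K * (-x ^ (1 / 2 - s) / (1 / 2 - s))) := by gcongr
    _ = K * x ^ (1 / 2 - s) * (s / (s - 1 / 2)) := by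
        rw [← neg_div_neg_eq, neg_neg, neg_sub]
        ring
    _ ≤ K * x ^ (-(1 / 2) : ℝ) * 2 := by gcongr
    _ = 2 * K / √x := by
        rw [Real.rpow_neg hx0.le, ← Real.sqrt_eq_rpow]
        ring

theorem uniformCauchySeqOn_of_norm_sub_le {α E : Type*} [SeminormedAddCommGroup E]
    {F : ℝ → α → E} {K : Set α} {b : ℝ → ℝ} (hb : Tendsto b atTop (𝓝 0)) {x₀ : ℝ}
    (h : ∀ s ∈ K, ∀ x y, x₀ ≤ x → x ≤ y → ‖F y s - F x s‖ ≤ b x) :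
    UniformCauchySeqOn F atTop K := by
  rw [Metric.uniformCauchySeqOn_iff]
  intro ε hε
  obtain ⟨N, hN, hbN⟩ :=
    ((eventually_ge_atTop x₀).and (hb.eventually (gt_mem_nhds (half_pos hε)))).exists
  refine ⟨N, fun m hm n hn s hs => ?_⟩
  calc dist (F m s) (F n s) ≤ dist (F m s) (F N s) + dist (F n s) (F N s) := dist_triangle_right ..
    _ ≤ b N + b N := by
        rw [dist_eq_norm, dist_eq_norm]
        exact add_le_add (h s hs N m hN hm) (h s hs N n hN hn)
    _ < ε := by linarith

theorem UniformCauchySeqOn.exists_tendstoUniformlyOn {ι α E : Type*} [Nonempty ι]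
    [SemilatticeSup ι] [UniformSpace E] [CompleteSpace E] [Nonempty E] {F : ι → α → E} {K : Set α}
    (hF : UniformCauchySeqOn F atTop K) : ∃ f, TendstoUniformlyOn F f atTop K :=
  ⟨fun s => limUnder atTop (F · s),
    hF.tendstoUniformlyOn_of_tendsto fun _ hs => (hF.cauchySeq hs).tendsto_limUnder⟩

lemma norm_vecCons (p : ℤ × ℤ) : ‖![p.1, p.2]‖ = ‖p‖ := by
  simp [norm_eq_max_natAbs, Prod.norm_def, Int.norm_eq_abs]

lemma summable_norm_rpow_neg {k : ℝ} (hk : 2 < k) : Summable fun p : ℤ × ℤ => ‖p‖ ^ (-k) := by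
  have := summable_one_div_norm_rpow hk
  rw [← (finTwoArrowEquiv ℤ).symm.summable_iff] at this
  simpa [Function.comp_def, norm_vecCons] using this

lemma fourierChar_eq_one_iff {x : ℝ} : (𝐞 x : ℂ) = 1 ↔ ∃ n : ℤ, (n : ℝ) = x := by
  rw [Circle.coe_eq_one, Real.fourierChar_apply', Circle.exp_eq_one]
  refine exists_congr fun n => ?_
  constructor <;> intro h <;> nlinarith [Real.pi_pos]

namespace LatticeSum

/-- `e(mu + nv)`, written as a product so that its rows and columns are geometric progressions. -/
noncomputable def twist (u v : ℝ) (p : ℤ × ℤ) : ℂ := (𝐞 u : ℂ) ^ p.1 * (𝐞 v : ℂ) ^ p.2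

lemma norm_twist (u v : ℝ) (p : ℤ × ℤ) : ‖twist u v p‖ = 1 := by
  simp [twist, Circle.norm_coe]

lemma latticeTerm_eq (τ : ℂ) (u v s : ℝ) (p : ℤ × ℤ) :
    latticeTerm τ u v s p = twist u v p / (((‖(p.1 : ℂ) * τ + p.2‖ ^ 2) ^ s : ℝ) : ℂ) := by
  rw [latticeTerm, Real.rpow_mul (norm_nonneg _), Real.rpow_two]
  congr 1
  rw [twist, ← Circle.coe_zpow, ← Circle.coe_zpow, ← Circle.coe_mul,
    ← AddChar.map_zsmul_eq_zpow, ← AddChar.map_zsmul_eq_zpow, ← AddChar.map_add_eq_mul,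
    Real.fourierChar_apply, zsmul_eq_mul, zsmul_eq_mul]
  push_cast
  ring_nf

lemma norm_latticeTerm (τ : ℂ) (u v s : ℝ) (p : ℤ × ℤ) :
    ‖latticeTerm τ u v s p‖ = ‖(p.1 : ℂ) * τ + p.2‖ ^ (-(2 * s)) := by
  rw [latticeTerm_eq, norm_div, norm_twist, Complex.norm_real,
    Real.norm_of_nonneg (by positivity), Real.rpow_neg (norm_nonneg _),
    Real.rpow_mul (norm_nonneg _), Real.rpow_two, one_div]

lemma latticeTerm_of_norm_eq_zero {τ : ℂ} {u v s : ℝ} {p : ℤ × ℤ} (hs : s ≠ 0)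
    (h : ‖(p.1 : ℂ) * τ + p.2‖ = 0) : latticeTerm τ u v s p = 0 := by
  rw [latticeTerm, h, Real.zero_rpow (mul_ne_zero two_ne_zero hs), Complex.ofReal_zero, div_zero]

lemma ite_eq_latticeTerm (τ : ℂ) (u v : ℝ) {s : ℝ} (hs : s ≠ 0) (p : ℤ × ℤ) :
    (if p = 0 then 0 else latticeTerm τ u v s p) = latticeTerm τ u v s p :=
  ite_eq_right_iff.2 fun hp => (latticeTerm_of_norm_eq_zero hs (by simp [hp])).symm

lemma continuousOn_latticeTerm (τ : ℂ) (u v : ℝ) (p : ℤ × ℤ) :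
    ContinuousOn (fun s => latticeTerm τ u v s p) (Set.Ioi 0) := by
  rcases eq_or_ne ‖(p.1 : ℂ) * τ + p.2‖ 0 with h | h
  · exact continuousOn_const.congr fun s hs => latticeTerm_of_norm_eq_zero (ne_of_gt hs) h
  · refine Continuous.continuousOn (continuous_const.div ?_ fun s => ?_)
    · exact Complex.continuous_ofReal.comp
        (continuous_const.rpow (continuous_const.mul continuous_id) fun _ => Or.inl h)
    · exact Complex.ofReal_ne_zero.2 (Real.rpow_pos_of_pos ((norm_nonneg _).lt_of_ne' h) _).ne'

variable (z : ℍ)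

lemma r_mul_norm_le (p : ℤ × ℤ) : r z * ‖p‖ ≤ ‖(p.1 : ℂ) * z + p.2‖ := by
  rcases eq_or_ne p 0 with rfl | hp
  · simp
  · have hp' : ![p.1, p.2] ≠ 0 := by
      contrapose! hp
      exact Prod.ext (congrFun hp 0) (congrFun hp 1)
    simpa [norm_vecCons] using r_mul_max_le z hp'

/-- By `r_mul_norm_le`, the box `[-discBound z x, discBound z x]²` contains every lattice point
with `‖p.1 * z + p.2‖ ^ 2 ≤ x`. -/
noncomputable def discBound (x : ℝ) : ℤ := ⌈√x / r z⌉

noncomputable def disc (x : ℝ) : Finset (ℤ × ℤ) :=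
  (Icc (-discBound z x) (discBound z x) ×ˢ Icc (-discBound z x) (discBound z x)).filter
    fun p => ‖(p.1 : ℂ) * z + p.2‖ ^ 2 ≤ x

variable {z}

lemma mem_disc {x : ℝ} {p : ℤ × ℤ} : p ∈ disc z x ↔ ‖(p.1 : ℂ) * z + p.2‖ ^ 2 ≤ x := by
  refine ⟨fun hp => (mem_filter.1 hp).2, fun hp => mem_filter.2 ⟨?_, hp⟩⟩
  have hpx : ‖p‖ ≤ √x / r z := by
    rw [le_div_iff₀ (r_pos z), mul_comm]
    exact (r_mul_norm_le z p).trans (Real.le_sqrt_of_sq_le hp)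
  have hIcc : ∀ k : ℤ, ‖k‖ ≤ ‖p‖ → k ∈ Icc (-discBound z x) (discBound z x) := by
    intro k hk
    have : ((|k| : ℤ) : ℝ) ≤ discBound z x := by
      rw [Int.cast_abs, ← Int.norm_eq_abs]
      exact (hk.trans hpx).trans (Int.le_ceil _)
    exact mem_Icc.2 (abs_le.1 (Int.cast_le.1 this))
  exact mem_product.2 ⟨hIcc _ (norm_fst_le p), hIcc _ (norm_snd_le p)⟩

lemma disc_mono : Monotone (disc z) :=
  fun _ _ hxy _ hp => mem_disc.2 ((mem_disc.1 hp).trans hxy)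

lemma card_Icc_discBound_le {x : ℝ} (hx : 1 ≤ x) :
    (#(Icc (-discBound z x) (discBound z x)) : ℝ) ≤ (2 / r z + 3) * √x := by
  have hB : 0 ≤ discBound z x := Int.ceil_nonneg (div_nonneg (Real.sqrt_nonneg x) (r_pos z).le)
  have hcard : (#(Icc (-discBound z x) (discBound z x)) : ℝ) = 2 * discBound z x + 1 := by
    have := Int.card_Icc_of_le (-discBound z x) (discBound z x) (by omega)
    rw [show discBound z x + 1 - -discBound z x = 2 * discBound z x + 1 by ring] at this
    exact_mod_cast this
  have hlt : (discBound z x : ℝ) < √x / r z + 1 := Int.ceil_lt_add_one _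
  have hsqrt : 1 ≤ √x := Real.one_le_sqrt.2 hx
  have : 2 / r z * √x = 2 * (√x / r z) := by ring
  rw [hcard, add_mul, this]
  linarith

variable (z)

lemma sum_disc_eq_sum_fiber_snd (x : ℝ) (f : ℤ × ℤ → ℂ) :
    ∑ p ∈ disc z x, f p = ∑ m ∈ Icc (-discBound z x) (discBound z x),
      ∑ n ∈ (Icc (-discBound z x) (discBound z x)).filter fun n : ℤ => ‖(m : ℂ) * z + n‖ ^ 2 ≤ x,
        f (m, n) := by
  rw [disc, sum_filter, sum_product]
  simp_rw [sum_filter]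

lemma sum_disc_eq_sum_fiber_fst (x : ℝ) (f : ℤ × ℤ → ℂ) :
    ∑ p ∈ disc z x, f p = ∑ n ∈ Icc (-discBound z x) (discBound z x),
      ∑ m ∈ (Icc (-discBound z x) (discBound z x)).filter fun m : ℤ => ‖(m : ℂ) * z + n‖ ^ 2 ≤ x,
        f (m, n) := by
  rw [disc, sum_filter, sum_product_right]
  simp_rw [sum_filter]

lemma ordConnected_fiber_snd (a b m : ℤ) (x : ℝ) :
    ((Icc a b).filter fun n : ℤ => ‖(m : ℂ) * z + n‖ ^ 2 ≤ x : Set ℤ).OrdConnected := by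
  convert (Set.ordConnected_Icc (a := a) (b := b)).inter
    (ordConnected_setOf_norm_zsmul_add_sq_le (1 : ℂ) ((m : ℂ) * z) x) using 1
  ext n
  simp [add_comm]

lemma ordConnected_fiber_fst (a b n : ℤ) (x : ℝ) :
    ((Icc a b).filter fun m : ℤ => ‖(m : ℂ) * z + n‖ ^ 2 ≤ x : Set ℤ).OrdConnected := by
  convert (Set.ordConnected_Icc (a := a) (b := b)).inter
    (ordConnected_setOf_norm_zsmul_add_sq_le (z : ℂ) (n : ℂ) x) using 1
  ext m
  simp [zsmul_eq_mul]

variable {z} in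
theorem exists_norm_sum_twist_disc_le {u v : ℝ} (h : (𝐞 u : ℂ) ≠ 1 ∨ (𝐞 v : ℂ) ≠ 1) :
    ∃ K, 0 ≤ K ∧ ∀ x, 1 ≤ x → ‖∑ p ∈ disc z x, twist u v p‖ ≤ K * √x := by
  obtain ⟨c, hc1, hc⟩ : ∃ c : ℂ, c ≠ 1 ∧ ∀ x, ‖∑ p ∈ disc z x, twist u v p‖ ≤
      #(Icc (-discBound z x) (discBound z x)) * (2 / ‖c - 1‖) := by
    rcases h with hu | hv
    · refine ⟨𝐞 u, hu, fun x => ?_⟩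
      rw [sum_disc_eq_sum_fiber_fst]
      refine norm_sum_sum_le_card_mul _ _ _ fun n _ => ?_
      simp only [twist, ← sum_mul, norm_mul, norm_zpow, Circle.norm_coe, one_zpow, mul_one]
      exact norm_sum_zpow_le_of_ordConnected (Circle.norm_coe _) hu
        (ordConnected_fiber_fst z _ _ n x)
    · refine ⟨𝐞 v, hv, fun x => ?_⟩
      rw [sum_disc_eq_sum_fiber_snd]
      refine norm_sum_sum_le_card_mul _ _ _ fun m _ => ?_
      simp only [twist, ← mul_sum, norm_mul, norm_zpow, Circle.norm_coe, one_zpow, one_mul]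
      exact norm_sum_zpow_le_of_ordConnected (Circle.norm_coe _) hv
        (ordConnected_fiber_snd z _ _ m x)
  have hc1' : 0 < ‖c - 1‖ := norm_pos_iff.2 (sub_ne_zero.2 hc1)
  refine ⟨(2 / r z + 3) * (2 / ‖c - 1‖), by have := r_pos z; positivity, fun x hx => ?_⟩
  refine (hc x).trans ?_
  rw [mul_right_comm]
  gcongr
  exact card_Icc_discBound_le hx

/-- The origin lies in `disc z x`, but contributes nothing for `s ≠ 0`: its term is
`1 / 0 = 0` (see `latticeTerm_of_norm_eq_zero`). -/
noncomputable def partialSum (u v s x : ℝ) : ℂ := ∑ p ∈ disc z x, latticeTerm z u v s p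

lemma continuousOn_partialSum (u v x : ℝ) :
    ContinuousOn (fun s => partialSum z u v s x) (Set.Ioi 0) :=
  continuousOn_finsetSum _ fun p _ => continuousOn_latticeTerm _ _ _ p

lemma tsum_ite_eq_partialSum (u v : ℝ) {s : ℝ} (hs : s ≠ 0) (x : ℝ) :
    (∑' p : ℤ × ℤ, if 0 < ‖(p.1 : ℂ) * z + (p.2 : ℂ)‖ ^ 2 ∧ ‖(p.1 : ℂ) * z + (p.2 : ℂ)‖ ^ 2 ≤ x
      then latticeTerm z u v s p else 0) = partialSum z u v s x := by
  rw [tsum_eq_sum (s := disc z x) fun p hp => if_neg fun h => hp (mem_disc.2 h.2), partialSum]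
  refine sum_congr rfl fun p hp => ?_
  by_cases h0 : 0 < ‖(p.1 : ℂ) * z + (p.2 : ℂ)‖ ^ 2
  · exact if_pos ⟨h0, mem_disc.1 hp⟩
  · rw [if_neg (not_and_of_not_left _ h0), latticeTerm_of_norm_eq_zero hs]
    nlinarith [norm_nonneg ((p.1 : ℂ) * z + (p.2 : ℂ))]

lemma summable_norm_latticeTerm (u v : ℝ) {s : ℝ} (hs : 1 < s) :
    Summable fun p => ‖latticeTerm z u v s p‖ := by
  refine ((summable_norm_rpow_neg (by linarith : 2 < 2 * s)).mul_left
    (r z ^ (-(2 * s)))).of_nonneg_of_le (fun _ => norm_nonneg _) fun p => ?_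
  rw [norm_latticeTerm, ← norm_vecCons]
  simpa using summand_bound z (by positivity : 0 ≤ 2 * s) ![p.1, p.2]

lemma tendsto_partialSum_tsum (u v : ℝ) {s : ℝ} (hs : 1 < s) :
    Tendsto (partialSum z u v s) atTop (𝓝 (∑' p, latticeTerm z u v s p)) :=
  (summable_norm_latticeTerm z u v hs).of_norm.hasSum.comp
    (tendsto_atTop_finset_of_monotone disc_mono fun _ => ⟨_, mem_disc.2 le_rfl⟩)

variable {z}

theorem exists_norm_partialSum_sub_le {u v : ℝ} (h : (𝐞 u : ℂ) ≠ 1 ∨ (𝐞 v : ℂ) ≠ 1) :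
    ∃ C, ∀ s, 1 ≤ s → ∀ x y, 1 ≤ x → x ≤ y →
      ‖partialSum z u v s y - partialSum z u v s x‖ ≤ C / √x := by
  obtain ⟨K, hK, hS⟩ := exists_norm_sum_twist_disc_le (z := z) h
  refine ⟨4 * K, fun s hs x y hx hxy => ?_⟩
  rw [partialSum, partialSum, ← sum_sdiff_eq_sub (disc_mono hxy)]
  simp_rw [latticeTerm_eq]
  convert norm_sum_div_rpow_le _ (twist u v) (fun p => ‖(p.1 : ℂ) * z + p.2‖ ^ 2) hx hs
    (by positivity : 0 ≤ 2 * K) (fun p hp => ?_) (fun t ht => ?_) using 1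
  · ring
  · simpa [mem_disc] using (mem_sdiff.1 hp).2
  · have hxt : x ≤ min y t := le_min hxy ht.le
    have hfilter : (disc z y \ disc z x).filter (fun p => ‖(p.1 : ℂ) * z + p.2‖ ^ 2 ≤ t) =
        disc z (min y t) \ disc z x := by
      ext p
      simp only [Finset.mem_filter, Finset.mem_sdiff, LatticeSum.mem_disc, le_min_iff]
      tauto
    rw [hfilter, sum_sdiff_eq_sub (disc_mono hxt)]
    have hmin := Real.sqrt_le_sqrt (min_le_right y t)
    have hxt' := Real.sqrt_le_sqrt ht.le
    calc _ ≤ ‖∑ p ∈ disc z (min y t), twist u v p‖ + ‖∑ p ∈ disc z x, twist u v p‖ :=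
          norm_sub_le _ _
      _ ≤ K * √(min y t) + K * √x := add_le_add (hS _ (hx.trans hxt)) (hS x hx)
      _ ≤ 2 * K * √t := by nlinarith

theorem exists_tendstoUniformlyOn_partialSum {u v : ℝ} (h : (𝐞 u : ℂ) ≠ 1 ∨ (𝐞 v : ℂ) ≠ 1) :
    ∃ f : ℝ → ℂ, TendstoUniformlyOn (fun x s => partialSum z u v s x) f atTop (Set.Ici 1) := by
  obtain ⟨C, hC⟩ := exists_norm_partialSum_sub_le (z := z) h
  exact UniformCauchySeqOn.exists_tendstoUniformlyOn <|
    uniformCauchySeqOn_of_norm_sub_le (tendsto_const_nhds.div_atTop Real.tendsto_sqrt_atTop) hC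

end LatticeSum

open LatticeSum

/-- for `Im τ > 0` and `u, v` not both integers, the limit
`f(s) = lim_{x→∞} ∑_{0 < |mτ+n|² ≤ x} e^{2πi(mu+nv)}/|mτ+n|^{2s}` exists for
every `s ∈ [1,2]`, `f` is continuous on `[1,2]`, and for `s ∈ (1,2]` the double
sum converges absolutely with sum `f(s)`. -/
theorem lattice_sum_continuous (τ : ℂ) (hτ : 0 < τ.im) (u v : ℝ)
    (huv : ¬((∃ a : ℤ, (a : ℝ) = u) ∧ (∃ b : ℤ, (b : ℝ) = v))) :
    ∃ f : ℝ → ℂ,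
      (∀ s ∈ Set.Icc (1 : ℝ) 2,
        Filter.Tendsto
          (fun x : ℝ => ∑' mn : ℤ × ℤ,
            if 0 < ‖(mn.1 : ℂ) * τ + (mn.2 : ℂ)‖ ^ 2 ∧
                ‖(mn.1 : ℂ) * τ + (mn.2 : ℂ)‖ ^ 2 ≤ x then
              latticeTerm τ u v s mn
            else 0)
          Filter.atTop (nhds (f s))) ∧
      ContinuousOn f (Set.Icc (1 : ℝ) 2) ∧
      ∀ s ∈ Set.Ioc (1 : ℝ) 2,
        Summable (fun mn : ℤ × ℤ =>
          ‖if mn = 0 then 0 else latticeTerm τ u v s mn‖) ∧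
        f s = ∑' mn : ℤ × ℤ, if mn = 0 then 0 else latticeTerm τ u v s mn := by
  obtain ⟨z, rfl⟩ : ∃ z : ℍ, (z : ℂ) = τ := ⟨⟨τ, hτ⟩, rfl⟩
  have h : (𝐞 u : ℂ) ≠ 1 ∨ (𝐞 v : ℂ) ≠ 1 := by
    rwa [← fourierChar_eq_one_iff, ← fourierChar_eq_one_iff, not_and_or] at huv
  obtain ⟨f, hf⟩ := exists_tendstoUniformlyOn_partialSum (z := z) h
  refine ⟨f, fun s hs => ?_, ?_, fun s hs => ?_⟩
  · simpa only [tsum_ite_eq_partialSum z u v (by linarith [hs.1] : s ≠ 0)] using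
      hf.tendsto_at hs.1
  · exact (hf.mono Set.Icc_subset_Ici_self).continuousOn (Frequently.of_forall fun x =>
      (continuousOn_partialSum z u v x).mono fun s hs => one_pos.trans_le hs.1)
  · simp only [ite_eq_latticeTerm _ u v (by linarith [hs.1] : s ≠ 0)]
    exact ⟨summable_norm_latticeTerm z u v hs.1,
      tendsto_nhds_unique (hf.tendsto_at (le_of_lt hs.1)) (tendsto_partialSum_tsum z u v hs.1)⟩
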